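/- Let H be the r-subdivision of a graph G, and v an eigenfunction of B_H with unitary eigenvalue λ. Define u on oriented edges of G by u_{k→l} = v_{k→k_1(l)} when deg(k) > 2 (where k_1(l) is the first subdivision node on the chain from k to l), and u_{k→j} = u_{i→k}/λ^r when deg(k) = 2 with neighbors i, j. Then u is an eigenfunction of B_G with eigenvalue λ^r. -/

import Mathlib

open SimpleGraph Matrix

/-- The non-backtracking matrix of a simple graph, indexed by oriented edges (darts). -/
def nbMatrix {V : Type} [Fintype V] [DecidableEq V] (G : SimpleGraph V) [DecidableRel G.Adj] :
    Matrix G.Dart G.Dart ℂ :=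
  fun d e => if e.toProd.2 = d.toProd.1 ∧ e.toProd.1 ≠ d.toProd.2 then 1 else 0

/-- The `r`-subdivision of a simple graph `G`: each edge `e` of `G`, with endpoints
`(Quot.out e).1` and `(Quot.out e).2`, is replaced by the path
`(Quot.out e).1, (e,0), (e,1), …, (e,r-2), (Quot.out e).2` through `r − 1` new
degree-2 nodes. (For `r = 1` the subdivision is `G` itself.) -/
def subdiv {V : Type} [Fintype V] [DecidableEq V] (G : SimpleGraph V) (r : ℕ) :
    SimpleGraph (V ⊕ (G.edgeSet × Fin (r - 1))) where
  Adj x y :=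
    match x, y with
    | Sum.inl a, Sum.inl b => r = 1 ∧ G.Adj a b
    | Sum.inl a, Sum.inr (e, i) =>
        (a = (Quot.out (e : Sym2 V)).1 ∧ (i : ℕ) = 0) ∨
          (a = (Quot.out (e : Sym2 V)).2 ∧ (i : ℕ) = r - 2)
    | Sum.inr (e, i), Sum.inl b =>
        (b = (Quot.out (e : Sym2 V)).1 ∧ (i : ℕ) = 0) ∨
          (b = (Quot.out (e : Sym2 V)).2 ∧ (i : ℕ) = r - 2)
    | Sum.inr (e, i), Sum.inr (f, j) => e = f ∧ ((i : ℕ) + 1 = (j : ℕ) ∨ (j : ℕ) + 1 = (i : ℕ))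
  symm := by
    constructor
    intro x y h
    rcases x with a | ⟨e, i⟩ <;> rcases y with b | ⟨f, j⟩ <;> simp_all
    · exact h.2.symm
    · tauto
  loopless := by
    constructor
    intro x h
    rcases x with a | ⟨e, i⟩
    · exact G.irrefl h.2
    · rcases h with ⟨-, h | h⟩ <;> omega

noncomputable instance subdivAdjDec {V : Type} [Fintype V] [DecidableEq V] (G : SimpleGraph V)
    (r : ℕ) : DecidableRel (subdiv G r).Adj := fun _ _ => Classical.propDecidable _

/-!
Every subdivision vertex of `H` has degree 2, so on the path `D₀, …, D_{r-1}` of `H` replacing a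
dart of `G` the eigenvector equation reads `v Dⱼ = λ v Dⱼ₊₁`, whence `v D₀ = λ ^ (r - 1) v D_{r-1}`.
Through an original vertex of degree 2 this links consecutive paths by the factor `λ ^ r`, the
recursion that defines `u`; so `u` agrees with `v` on first darts of paths wherever the recursion
reaches back to a vertex of degree `> 2`, in particular on every dart entering such a vertex. At a
vertex `k` of degree `> 2`, `‖λ‖ = 1` forces the total of `v` over the darts entering `k` to
vanish, because `‖B v‖² - ‖v‖² = ∑ₓ (deg x - 2) |∑_{d.snd = x} v d|²` and all degrees are at
least 2. Summing the path relations over the darts into `k` then gives `(B_G u) d = λ ^ r u d`.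
-/

namespace SimpleGraph

variable {V : Type} [Fintype V] [DecidableEq V] {G : SimpleGraph V} [DecidableRel G.Adj]

lemma eq_of_degree_eq_two {x a b c : V} (h : G.degree x = 2) (ha : G.Adj x a) (hb : G.Adj x b)
    (hc : G.Adj x c) (hac : a ≠ c) (hbc : b ≠ c) : a = b := by
  by_contra hab
  have : 2 < G.degree x := Finset.two_lt_card.mpr
    ⟨a, by simpa, b, by simpa, c, by simpa, hab, hac, hbc⟩
  omega

lemma exists_dart_snd_eq_fst_ne (hmin : ∀ x, 2 ≤ G.degree x) (d : G.Dart) :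
    ∃ e : G.Dart, e.snd = d.fst ∧ e.fst ≠ d.snd := by
  obtain ⟨a, ha, b, hb, hab⟩ := Finset.one_lt_card.mp (hmin d.fst)
  rw [mem_neighborFinset] at ha hb
  by_cases had : a = d.snd
  · exact ⟨⟨(b, d.fst), hb.symm⟩, rfl, had ▸ Ne.symm hab⟩
  · exact ⟨⟨(a, d.fst), ha.symm⟩, rfl, had⟩

/-- Stepping back through a vertex of degree 2 is injective, so it permutes the finite set of darts
where `P` fails; each of them is then itself such a step, and its head has degree 2. -/
lemma dart_prop_of_two_lt_degree_snd (hmin : ∀ x, 2 ≤ G.degree x) {P : G.Dart → Prop}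
    (hbig : ∀ d : G.Dart, 2 < G.degree d.fst → P d)
    (hstep : ∀ d e : G.Dart, G.degree d.fst = 2 → e.snd = d.fst → e.fst ≠ d.snd → P e → P d)
    {d : G.Dart} (hd : 2 < G.degree d.snd) : P d := by
  choose p hp using exists_dart_snd_eq_fst_ne hmin
  set S : Set G.Dart := {d | ¬ P d}
  have hdeg : ∀ d ∈ S, G.degree d.fst = 2 := fun d hS =>
    le_antisymm (not_lt.mp fun h => hS (hbig d h)) (hmin _)
  have hmaps : Set.MapsTo p S S := fun d hS hpd =>
    hS (hstep d (p d) (hdeg d hS) (hp d).1 (hp d).2 hpd)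
  have hinj : Set.InjOn p S := by
    intro d hS d' _ hpp
    have hfst : d.fst = d'.fst := (hp d).1.symm.trans (hpp ▸ (hp d').1)
    have hc : G.Adj d.fst (p d).fst := (hp d).1 ▸ (p d).adj.symm
    have hsnd : d.snd = d'.snd := eq_of_degree_eq_two (hdeg d hS) d.adj (hfst ▸ d'.adj) hc
      (hp d).2.symm (hpp ▸ (hp d').2.symm)
    exact Dart.ext _ _ (Prod.ext hfst hsnd)
  by_contra hPd
  obtain ⟨q, hq, rfl⟩ :=
    ((S.toFinite.injOn_iff_bijOn_of_mapsTo hmaps).mp hinj).surjOn hPd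
  have := hdeg q hq
  rw [(hp q).1] at hd
  omega

end SimpleGraph

section NonBacktracking

open Finset

variable {W : Type} [Fintype W] [DecidableEq W] {H : SimpleGraph W} [DecidableRel H.Adj]

def inflow {M : Type} [AddCommMonoid M] (v : H.Dart → M) (x : W) : M :=
  ∑ d with d.snd = x, v d

lemma inflow_eq_sum_symm {M : Type} [AddCommMonoid M] (v : H.Dart → M) (x : W) :
    inflow v x = ∑ d : H.Dart with d.fst = x, v d.symm := by
  rw [inflow, sum_filter, sum_filter,
    ← Equiv.sum_comp (Dart.symm_involutive.toPerm _)
      (fun d : H.Dart => if d.snd = x then v d else 0)]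
  rfl

lemma nbMatrix_mulVec_apply (v : H.Dart → ℂ) (d : H.Dart) :
    (nbMatrix H *ᵥ v) d = ∑ e with e.snd = d.fst ∧ e.fst ≠ d.snd, v e := by
  simp only [mulVec, dotProduct, nbMatrix, ite_mul, one_mul, zero_mul, sum_filter]

lemma nbMatrix_mulVec_apply_eq_inflow_sub (v : H.Dart → ℂ) (d : H.Dart) :
    (nbMatrix H *ᵥ v) d = inflow v d.fst - v d.symm := by
  have hset : ({e | e.snd = d.fst ∧ e.fst ≠ d.snd} : Finset H.Dart) =
      ({e | e.snd = d.fst} : Finset H.Dart).erase d.symm := by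
    ext e
    simp only [mem_filter, mem_erase, mem_univ, true_and, ne_eq, Dart.ext_iff, Prod.ext_iff]
    exact ⟨fun h => ⟨fun h' => h.2 h'.1, h.1⟩, fun h => ⟨h.2, fun h' => h.1 ⟨h', h.2⟩⟩⟩
  rw [nbMatrix_mulVec_apply, hset, sum_erase_eq_sub (by simp), inflow]

lemma nbMatrix_mulVec_apply_of_degree_eq_two (v : H.Dart → ℂ) {d e : H.Dart}
    (hd : H.degree d.fst = 2) (he : e.snd = d.fst) (he' : e.fst ≠ d.snd) :
    (nbMatrix H *ᵥ v) d = v e := by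
  rw [nbMatrix_mulVec_apply, sum_eq_single_of_mem e (by simp [he, he'])]
  intro b hb hbe
  simp only [mem_filter, mem_univ, true_and] at hb
  refine absurd (Dart.ext _ _ (Prod.ext ?_ (hb.1.trans he.symm))) hbe
  exact eq_of_degree_eq_two hd (hb.1 ▸ b.adj.symm) (he ▸ e.adj.symm) d.adj hb.2 he'

/-- Expand `‖B v‖² = ‖v‖²` using `(B v) d = inflow v d.fst - v d.symm`. -/
lemma sum_degree_sub_two_mul_normSq_inflow {lam : ℂ} (hlam : ‖lam‖ = 1) {v : H.Dart → ℂ}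
    (hv : nbMatrix H *ᵥ v = lam • v) :
    ∑ x, ((H.degree x : ℝ) - 2) * Complex.normSq (inflow v x) = 0 := by
  have hnorm : ∑ d : H.Dart, Complex.normSq (inflow v d.fst - v d.symm) =
      ∑ d, Complex.normSq (v d) := by
    refine sum_congr rfl fun d _ => ?_
    rw [← nbMatrix_mulVec_apply_eq_inflow_sub, hv, Pi.smul_apply, smul_eq_mul,
      Complex.normSq_mul, Complex.normSq_eq_norm_sq, hlam, one_pow, one_mul]
  have hsymm : ∑ d : H.Dart, Complex.normSq (v d.symm) = ∑ d, Complex.normSq (v d) :=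
    Equiv.sum_comp (Dart.symm_involutive.toPerm _) (fun d : H.Dart => Complex.normSq (v d))
  have hsq : ∑ d : H.Dart, Complex.normSq (inflow v d.fst) =
      ∑ x, (H.degree x : ℝ) * Complex.normSq (inflow v x) := by
    rw [← sum_fiberwise univ fun d : H.Dart => d.fst]
    refine sum_congr rfl fun x _ => ?_
    rw [sum_congr rfl fun (d : H.Dart) hd => by rw [(mem_filter.mp hd).2], sum_const,
      nsmul_eq_mul, dart_fst_fiber_card_eq_degree]
  have hcross : ∑ d : H.Dart, (inflow v d.fst * (starRingEnd ℂ) (v d.symm)).re =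
      ∑ x, Complex.normSq (inflow v x) := by
    rw [← sum_fiberwise univ fun d : H.Dart => d.fst]
    refine sum_congr rfl fun x _ => ?_
    rw [sum_congr rfl fun (d : H.Dart) hd => by rw [(mem_filter.mp hd).2], ← Complex.re_sum,
      ← mul_sum, ← map_sum, ← inflow_eq_sum_symm, Complex.mul_conj, Complex.ofReal_re]
  simp only [Complex.normSq_sub, sum_sub_distrib, sum_add_distrib, ← mul_sum] at hnorm
  rw [hsymm, hsq, hcross] at hnorm
  simp only [sub_mul, sum_sub_distrib, ← mul_sum]
  linarith

lemma inflow_eq_zero_of_two_lt_degree (hmin : ∀ x, 2 ≤ H.degree x) {lam : ℂ} (hlam : ‖lam‖ = 1)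
    {v : H.Dart → ℂ} (hv : nbMatrix H *ᵥ v = lam • v) {x : W} (hx : 2 < H.degree x) :
    inflow v x = 0 := by
  have hnonneg : ∀ y ∈ univ, 0 ≤ ((H.degree y : ℝ) - 2) * Complex.normSq (inflow v y) :=
    fun y _ => mul_nonneg (sub_nonneg.mpr (mod_cast hmin y)) (Complex.normSq_nonneg _)
  have hterm := (sum_eq_zero_iff_of_nonneg hnonneg).mp
    (sum_degree_sub_two_mul_normSq_inflow hlam hv) x (mem_univ x)
  have hpos : (0 : ℝ) < H.degree x - 2 := sub_pos.mpr (mod_cast hx)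
  exact Complex.normSq_eq_zero.mp ((mul_eq_zero.mp hterm).resolve_left hpos.ne')

end NonBacktracking

namespace Sym2

lemma mk_out {α : Type} (e : Sym2 α) : s((Quot.out e).1, (Quot.out e).2) = e :=
  Quot.out_eq e

lemma out_mk_eq_or_swap {α : Type} (a b : α) :
    Quot.out s(a, b) = (a, b) ∨ Quot.out s(a, b) = (b, a) := by
  rcases eq_iff.mp (mk_out s(a, b)) with ⟨h1, h2⟩ | ⟨h1, h2⟩
  · exact .inl (Prod.ext h1 h2)
  · exact .inr (Prod.ext h1 h2)

end Sym2

namespace subdiv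

open Finset

variable {V : Type} {G : SimpleGraph V} {r : ℕ}

lemma adj_out (e : G.edgeSet) : G.Adj (Quot.out (e : Sym2 V)).1 (Quot.out (e : Sym2 V)).2 := by
  rw [← mem_edgeSet, Sym2.mk_out]
  exact e.2

/-- Vertex `j` of the path `P₀ = (Quot.out e).1, P₁, …, P_r = (Quot.out e).2` replacing `e`. -/
noncomputable def pathVertex (r : ℕ) (e : G.edgeSet) (j : ℕ) : V ⊕ (G.edgeSet × Fin (r - 1)) :=
  if h : 0 < j ∧ j < r then .inr (e, ⟨j - 1, by omega⟩)
  else if j = 0 then .inl (Quot.out (e : Sym2 V)).1 else .inl (Quot.out (e : Sym2 V)).2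

lemma pathVertex_zero (e : G.edgeSet) : pathVertex r e 0 = .inl (Quot.out (e : Sym2 V)).1 := by
  simp [pathVertex]

lemma pathVertex_self (hr : 0 < r) (e : G.edgeSet) :
    pathVertex r e r = .inl (Quot.out (e : Sym2 V)).2 := by
  simp [pathVertex, hr.ne']

lemma pathVertex_of_pos_of_lt (e : G.edgeSet) {j : ℕ} (h0 : 0 < j) (hj : j < r) :
    pathVertex r e j = .inr (e, ⟨j - 1, by omega⟩) := by
  simp [pathVertex, h0, hj]

lemma pathVertex_injOn (e : G.edgeSet) {j j' : ℕ} (hj : j ≤ r) (hj' : j' ≤ r)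
    (h : pathVertex r e j = pathVertex r e j') : j = j' := by
  have := (adj_out e).ne
  unfold pathVertex at h
  split_ifs at h <;> simp_all <;> omega

lemma out_edge_eq_or_swap (d : G.Dart) :
    Quot.out d.edge = d.toProd ∨ Quot.out d.edge = d.toProd.swap :=
  Sym2.out_mk_eq_or_swap d.fst d.snd

variable [DecidableEq V]

/-- The same path, for the edge of `d` and counted from `d.fst`. -/
noncomputable def chainVertex (r : ℕ) (d : G.Dart) (j : ℕ) : V ⊕ (G.edgeSet × Fin (r - 1)) :=
  pathVertex r ⟨d.edge, d.edge_mem⟩ (if d.fst = (Quot.out d.edge).1 then j else r - j)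

lemma chainVertex_eq_pathVertex (d : G.Dart) (e : G.edgeSet) (he : d.edge = e) (j : ℕ) :
    chainVertex r d j =
      pathVertex r e (if d.fst = (Quot.out (e : Sym2 V)).1 then j else r - j) := by
  obtain ⟨e, he'⟩ := e
  subst he
  rfl

lemma chainVertex_zero (hr : 0 < r) (d : G.Dart) : chainVertex r d 0 = .inl d.fst := by
  rcases out_edge_eq_or_swap d with h | h <;>
    simp [chainVertex, h, pathVertex_zero, pathVertex_self hr, d.fst_ne_snd]

lemma chainVertex_self (hr : 0 < r) (d : G.Dart) : chainVertex r d r = .inl d.snd := by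
  rcases out_edge_eq_or_swap d with h | h <;>
    simp [chainVertex, h, pathVertex_zero, pathVertex_self hr, d.fst_ne_snd]

lemma chainVertex_symm (d : G.Dart) {j : ℕ} (hj : j ≤ r) :
    chainVertex r d.symm j = chainVertex r d (r - j) := by
  simp only [chainVertex, Dart.edge_symm]
  rcases out_edge_eq_or_swap d with h | h <;> simp [h, d.fst_ne_snd, d.snd_ne_fst]
  rw [Nat.sub_sub_self hj]

lemma chainVertex_injOn (d : G.Dart) {j j' : ℕ} (hj : j ≤ r) (hj' : j' ≤ r)
    (h : chainVertex r d j = chainVertex r d j') : j = j' := by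
  unfold chainVertex at h
  split_ifs at h <;> have := pathVertex_injOn _ (by omega) (by omega) h <;> omega

lemma chainVertex_of_pos_of_lt (d : G.Dart) {j : ℕ} (h0 : 0 < j) (hj : j < r) :
    ∃ i, chainVertex r d j = .inr (⟨d.edge, d.edge_mem⟩, i) := by
  unfold chainVertex
  split_ifs
  · exact ⟨_, pathVertex_of_pos_of_lt _ h0 hj⟩
  · exact ⟨_, pathVertex_of_pos_of_lt _ (by omega) (by omega)⟩

lemma chainVertex_one (hr : 0 < r) (d : G.Dart) :
    chainVertex r d 1 = .inl d.snd ∨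
      ∃ i, chainVertex r d 1 = .inr (⟨d.edge, d.edge_mem⟩, i) := by
  rcases (by omega : r = 1 ∨ 1 < r) with rfl | hr1
  · exact .inl (chainVertex_self hr d)
  · exact .inr (chainVertex_of_pos_of_lt d one_pos hr1)

lemma chainVertex_one_injective (hr : 0 < r) {d d' : G.Dart} (hfst : d.fst = d'.fst)
    (h : chainVertex r d 1 = chainVertex r d' 1) : d = d' := by
  rcases chainVertex_one hr d with hd | ⟨i, hd⟩ <;>
    rcases chainVertex_one hr d' with hd' | ⟨i', hd'⟩ <;> rw [hd, hd'] at h <;> simp at h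
  · exact Dart.ext _ _ (Prod.ext hfst h)
  · rcases (dart_edge_eq_iff d d').mp h.1 with rfl | rfl
    · rfl
    · exact absurd hfst d'.snd_ne_fst

variable [Fintype V]

lemma adj_pathVertex_succ (e : G.edgeSet) {j : ℕ} (hj : j < r) :
    (subdiv G r).Adj (pathVertex r e j) (pathVertex r e (j + 1)) := by
  have := adj_out e
  unfold pathVertex
  split_ifs <;> simp_all [subdiv] <;> omega

lemma adj_inr_iff (e : G.edgeSet) (i : Fin (r - 1)) (y : V ⊕ (G.edgeSet × Fin (r - 1))) :
    (subdiv G r).Adj (.inr (e, i)) y ↔ y = pathVertex r e i ∨ y = pathVertex r e (i + 2) := by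
  have := i.2
  have := (adj_out e).ne
  rcases y with a | ⟨f, m⟩ <;> unfold pathVertex <;> split_ifs <;> simp [subdiv] <;> grind

lemma exists_pathVertex_of_adj_inl {k : V} {y : V ⊕ (G.edgeSet × Fin (r - 1))}
    (h : (subdiv G r).Adj (.inl k) y) :
    ∃ e : G.edgeSet, ((Quot.out (e : Sym2 V)).1 = k ∧ y = pathVertex r e 1) ∨
      ((Quot.out (e : Sym2 V)).2 = k ∧ y = pathVertex r e (r - 1)) := by
  rcases y with b | ⟨f, i⟩
  · obtain ⟨rfl, hkb⟩ := h
    refine ⟨⟨s(k, b), hkb⟩, ?_⟩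
    rcases Sym2.out_mk_eq_or_swap k b with ho | ho <;> simp [pathVertex, ho]
  · refine ⟨f, ?_⟩
    have := i.2
    unfold pathVertex
    split_ifs <;> simp_all [subdiv] <;> grind

lemma chainVertex_adj (d : G.Dart) {j : ℕ} (hj : j < r) :
    (subdiv G r).Adj (chainVertex r d j) (chainVertex r d (j + 1)) := by
  unfold chainVertex
  split_ifs
  · exact adj_pathVertex_succ _ hj
  · have h := adj_pathVertex_succ ⟨d.edge, d.edge_mem⟩ (r := r) (j := r - (j + 1)) (by omega)
    rw [show r - (j + 1) + 1 = r - j by omega] at h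
    exact h.symm

lemma exists_chainVertex_one_eq {k : V} {y : V ⊕ (G.edgeSet × Fin (r - 1))}
    (h : (subdiv G r).Adj (.inl k) y) : ∃ d : G.Dart, d.fst = k ∧ y = chainVertex r d 1 := by
  obtain ⟨e, ⟨hk, rfl⟩ | ⟨hk, rfl⟩⟩ := exists_pathVertex_of_adj_inl h
  · let d : G.Dart := ⟨Quot.out (e : Sym2 V), adj_out e⟩
    refine ⟨d, hk, ?_⟩
    rw [chainVertex_eq_pathVertex d e (Sym2.mk_out _), if_pos rfl]
  · let d : G.Dart := ⟨(Quot.out (e : Sym2 V)).swap, (adj_out e).symm⟩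
    refine ⟨d, hk, ?_⟩
    rw [chainVertex_eq_pathVertex d e (Sym2.eq_swap.trans (Sym2.mk_out _))]
    simp [d, (adj_out e).ne']

noncomputable def chainDart (r : ℕ) (d : G.Dart) (j : ℕ) (hj : j < r) : (subdiv G r).Dart :=
  ⟨(chainVertex r d j, chainVertex r d (j + 1)), chainVertex_adj d hj⟩

lemma chainDart_zero_symm (hr : 0 < r) (d : G.Dart) :
    (chainDart r d 0 hr).symm = chainDart r d.symm (r - 1) (by omega) := by
  ext <;> simp [chainDart, chainVertex_symm, Nat.sub_add_cancel hr, Nat.sub_sub_self hr]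

lemma bijOn_chainDart_zero (hr : 0 < r) (k : V) :
    Set.BijOn (fun d => chainDart r d 0 hr) {d : G.Dart | d.fst = k}
      {D : (subdiv G r).Dart | D.fst = .inl k} := by
  refine ⟨fun d hd => ?_, fun d hd d' hd' h => ?_, fun D hD => ?_⟩
  · exact (chainVertex_zero hr d).trans (congrArg Sum.inl hd)
  · exact chainVertex_one_injective hr (hd.trans hd'.symm) (congrArg (·.snd) h)
  · have hD : D.fst = .inl k := hD
    obtain ⟨d, rfl, hd⟩ := exists_chainVertex_one_eq (hD ▸ D.adj)
    exact ⟨d, rfl, Dart.ext _ _ (Prod.ext ((chainVertex_zero hr d).trans hD.symm) hd.symm)⟩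

variable [DecidableRel G.Adj]

lemma degree_inr (e : G.edgeSet) (i : Fin (r - 1)) : (subdiv G r).degree (.inr (e, i)) = 2 := by
  have := i.2
  have hne : pathVertex r e i ≠ pathVertex r e (i + 2) := fun h => by
    have := pathVertex_injOn e (by omega) (by omega) h
    omega
  rw [← card_neighborFinset_eq_degree, ← card_pair hne]
  congr 1
  ext y
  simp [adj_inr_iff]

lemma sum_chainDart_zero (hr : 0 < r) {M : Type} [AddCommMonoid M]
    (f : (subdiv G r).Dart → M) (k : V) :
    ∑ d : G.Dart with d.fst = k, f (chainDart r d 0 hr) = ∑ D with D.fst = .inl k, f D :=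
  let h := bijOn_chainDart_zero hr k
  sum_nbij _ (fun _ hd => by simpa using h.mapsTo (by simpa using hd)) (by simpa using h.injOn)
    (by simpa using h.surjOn) fun _ _ => rfl

lemma degree_inl (hr : 0 < r) (k : V) : (subdiv G r).degree (.inl k) = G.degree k := by
  rw [← dart_fst_fiber_card_eq_degree, ← dart_fst_fiber_card_eq_degree, card_eq_sum_ones,
    card_eq_sum_ones]
  exact (sum_chainDart_zero hr (fun _ => 1) k).symm

lemma two_le_degree (hr : 0 < r) (hmin : ∀ x, 2 ≤ G.degree x) :
    ∀ x, 2 ≤ (subdiv G r).degree x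
  | .inl k => (degree_inl (G := G) hr k).symm ▸ hmin k
  | .inr (e, i) => (degree_inr e i).ge

section Eigenvector

variable {lam : ℂ} {v : (subdiv G r).Dart → ℂ} (hv : nbMatrix (subdiv G r) *ᵥ v = lam • v)
include hv

lemma mul_apply_chainDart_succ (d : G.Dart) {j : ℕ} (hj : j + 1 < r) :
    lam * v (chainDart r d (j + 1) hj) = v (chainDart r d j (by omega)) := by
  obtain ⟨i, hi⟩ := chainVertex_of_pos_of_lt d (by omega : 0 < j + 1) hj
  rw [← smul_eq_mul, ← Pi.smul_apply, ← hv]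
  refine nbMatrix_mulVec_apply_of_degree_eq_two v ?_ rfl fun h => ?_
  · show (subdiv G r).degree (chainVertex r d (j + 1)) = 2
    rw [hi, degree_inr]
  · have := chainVertex_injOn d (by omega) (by omega) h
    omega

lemma apply_chainDart_zero (hr : 0 < r) (d : G.Dart) :
    v (chainDart r d 0 hr) = lam ^ (r - 1) * v (chainDart r d (r - 1) (by omega)) := by
  suffices ∀ j (hj : j < r), v (chainDart r d 0 hr) = lam ^ j * v (chainDart r d j hj) from
    this _ _
  intro j
  induction j with
  | zero => simp
  | succ j ih =>
    intro hj
    rw [ih (by omega), pow_succ, mul_assoc, mul_apply_chainDart_succ hv d hj]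

lemma mul_apply_chainDart_zero_of_degree_eq_two (hr : 0 < r) {d e : G.Dart}
    (hd : G.degree d.fst = 2) (he : e.snd = d.fst) (he' : e.fst ≠ d.snd) :
    lam * v (chainDart r d 0 hr) = v (chainDart r e (r - 1) (by omega)) := by
  rw [← smul_eq_mul, ← Pi.smul_apply, ← hv]
  refine nbMatrix_mulVec_apply_of_degree_eq_two v ?_ ?_ fun h => ?_
  · show (subdiv G r).degree (chainVertex r d 0) = 2
    rw [chainVertex_zero hr, degree_inl hr, hd]
  · show chainVertex r e (r - 1 + 1) = chainVertex r d 0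
    rw [Nat.sub_add_cancel hr, chainVertex_self hr, chainVertex_zero hr, he]
  · have h' : chainVertex r e.symm 1 = chainVertex r d 1 := (chainVertex_symm e hr).trans h
    exact he' (congrArg (·.snd) (chainVertex_one_injective hr he h'))

lemma pow_mul_apply_chainDart_zero_of_degree_eq_two (hr : 0 < r) {d e : G.Dart}
    (hd : G.degree d.fst = 2) (he : e.snd = d.fst) (he' : e.fst ≠ d.snd) :
    lam ^ r * v (chainDart r d 0 hr) = v (chainDart r e 0 hr) := by
  rw [apply_chainDart_zero hv hr e, ← mul_apply_chainDart_zero_of_degree_eq_two hv hr hd he he',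
    ← mul_assoc, pow_sub_one_mul (by omega : r ≠ 0)]

lemma apply_chainDart_zero_symm (hr : 0 < r) (d : G.Dart) :
    v (chainDart r d.symm 0 hr) = lam ^ (r - 1) * v (chainDart r d 0 hr).symm := by
  rw [apply_chainDart_zero hv hr, chainDart_zero_symm]

variable (hmin : ∀ x, 2 ≤ G.degree x) (hlam : ‖lam‖ = 1)
include hmin hlam

lemma inflow_inl_eq_zero (hr : 0 < r) {k : V} (hk : 2 < G.degree k) : inflow v (.inl k) = 0 :=
  inflow_eq_zero_of_two_lt_degree (two_le_degree hr hmin) hlam hv (by rwa [degree_inl hr])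

lemma mul_apply_chainDart_zero_of_two_lt_degree (hr : 0 < r) {d : G.Dart}
    (hd : 2 < G.degree d.fst) : lam * v (chainDart r d 0 hr) = -v (chainDart r d 0 hr).symm := by
  rw [← smul_eq_mul, ← Pi.smul_apply, ← hv, nbMatrix_mulVec_apply_eq_inflow_sub]
  show inflow v (chainVertex r d 0) - _ = _
  rw [chainVertex_zero hr, inflow_inl_eq_zero hv hmin hlam hr hd, zero_sub]

lemma sum_apply_symm_chainDart_zero (hr : 0 < r) {k : V} (hk : 2 < G.degree k) :
    ∑ d : G.Dart with d.fst = k, v (chainDart r d 0 hr).symm = 0 := by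
  rw [sum_chainDart_zero hr (fun D => v D.symm), ← inflow_eq_sum_symm,
    inflow_inl_eq_zero hv hmin hlam hr hk]

end Eigenvector

end subdiv

open subdiv in
theorem subdivision_eigenfunction_general {V : Type} [Fintype V] [DecidableEq V]
    (G : SimpleGraph V) [DecidableRel G.Adj] (hmin : ∀ x : V, 2 ≤ G.degree x)
    (r : ℕ) (hr : 1 ≤ r) (lam : ℂ) (hlam : ‖lam‖ = 1)
    (v : (subdiv G r).Dart → ℂ)
    (hv : (nbMatrix (subdiv G r)).mulVec v = lam • v)
    (u : G.Dart → ℂ)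
    (hu1 : ∀ (d : G.Dart) (D : (subdiv G r).Dart),
      2 < G.degree d.toProd.1 →
      D.toProd.1 = Sum.inl d.toProd.1 →
      (D.toProd.2 = Sum.inl d.toProd.2 ∨
        ∃ (he : s(d.toProd.1, d.toProd.2) ∈ G.edgeSet) (i : Fin (r - 1)),
          D.toProd.2 = Sum.inr (⟨s(d.toProd.1, d.toProd.2), he⟩, i)) →
      u d = v D)
    (hu2 : ∀ d d' : G.Dart, G.degree d.toProd.1 = 2 →
      d'.toProd.2 = d.toProd.1 → d'.toProd.1 ≠ d.toProd.2 → u d = u d' / lam ^ r) :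
    (nbMatrix G).mulVec u = (lam ^ r) • u := by
  have hlam0 : lam ^ r ≠ 0 := pow_ne_zero r (by rintro rfl; simp at hlam)
  have hleaving : ∀ d : G.Dart, 2 < G.degree d.fst → u d = v (chainDart r d 0 hr) := fun d hd =>
    hu1 d _ hd (chainVertex_zero hr d) ((chainVertex_one hr d).imp_right fun ⟨i, hi⟩ =>
      ⟨d.edge_mem, i, hi⟩)
  have hentering : ∀ d : G.Dart, 2 < G.degree d.snd → u d = v (chainDart r d 0 hr) :=
    fun d => dart_prop_of_two_lt_degree_snd hmin hleaving fun d e hd he he' h => by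
      rw [hu2 d e hd he he', h, ← pow_mul_apply_chainDart_zero_of_degree_eq_two hv hr hd he he',
        mul_div_cancel_left₀ _ hlam0]
  ext d
  rw [Pi.smul_apply, smul_eq_mul]
  rcases (hmin d.fst).eq_or_lt with hd | hd
  · obtain ⟨e, he, he'⟩ := exists_dart_snd_eq_fst_ne hmin d
    rw [nbMatrix_mulVec_apply_of_degree_eq_two u hd.symm he he', hu2 d e hd.symm he he',
      mul_div_cancel₀ _ hlam0]
  · have hsymm : ∀ e : G.Dart, e.fst = d.fst →
        u e.symm = lam ^ (r - 1) * v (chainDart r e 0 hr).symm := fun e he => by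
      rw [hentering e.symm (show 2 < G.degree e.fst by rwa [he]), apply_chainDart_zero_symm hv hr]
    rw [nbMatrix_mulVec_apply_eq_inflow_sub, inflow_eq_sum_symm,
      Finset.sum_congr rfl fun e he => hsymm e (Finset.mem_filter.mp he).2, ← Finset.mul_sum,
      sum_apply_symm_chainDart_zero hv hmin hlam hr hd, hsymm d rfl, hleaving d hd,
      ← pow_sub_one_mul (by omega : r ≠ 0), mul_assoc,
      mul_apply_chainDart_zero_of_two_lt_degree hv hmin hlam hr hd]
    ring

/-- Let H be the r-subdivision of G and v an eigenfunction of B_H with unitary eigenvalue λ.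
If u is defined on the darts of G by `u (k→l) = v (k → k₁(l))` whenever deg k > 2 (where
`k₁(l)` is the first node after k on the subdivision chain from k to l), and by
`u (k→j) = u (i→k) / λ^r` whenever deg k = 2 with neighbors i ≠ j, then u is an
eigenfunction of B_G with eigenvalue λ^r. -/
theorem subdivision_eigenfunction {V : Type} [Fintype V] [DecidableEq V]
    (G : SimpleGraph V) [DecidableRel G.Adj] (hmin : ∀ x : V, 2 ≤ G.degree x)
    (r : ℕ) (hr : 1 ≤ r) (lam : ℂ) (hlam : ‖lam‖ = 1)
    (v : (subdiv G r).Dart → ℂ) (hv0 : v ≠ 0)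
    (hv : (nbMatrix (subdiv G r)).mulVec v = lam • v)
    (u : G.Dart → ℂ)
    (hu1 : ∀ (d : G.Dart) (D : (subdiv G r).Dart),
      2 < G.degree d.toProd.1 →
      D.toProd.1 = Sum.inl d.toProd.1 →
      (D.toProd.2 = Sum.inl d.toProd.2 ∨
        ∃ (he : s(d.toProd.1, d.toProd.2) ∈ G.edgeSet) (i : Fin (r - 1)),
          D.toProd.2 = Sum.inr (⟨s(d.toProd.1, d.toProd.2), he⟩, i)) →
      u d = v D)
    (hu2 : ∀ d d' : G.Dart, G.degree d.toProd.1 = 2 →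
      d'.toProd.2 = d.toProd.1 → d'.toProd.1 ≠ d.toProd.2 → u d = u d' / lam ^ r) :
    (nbMatrix G).mulVec u = (lam ^ r) • u :=
  subdivision_eigenfunction_general G hmin r hr lam hlam v hv u hu1 hu2
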